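/- arXiv:1806.00002 — 6 statements merged into one kernel-verified Lean document; each statement's English description precedes it below -/
import Mathlib

section
/- Let d ≥ 1, let n : Fin d → ℕ, and let A : (∀ k : Fin d, Fin (n k)) → ℝ be a tensor of size n 0 × n 1 × ⋯ × n (d-1). Suppose there exist finite sets S k ⊆ Fin (n k) (one for each k : Fin d) such that A x = 0 whenever x k ∈ S k for every k, and such that ∑_{k : Fin d} |S k| = 1 + ∑_{k ≠ 0} n k. Then per(A) = 0. -/
/-- The permanent (1-permanent) of a tensor of size `n 0 × n 1 × ⋯ × n (d-1)`:
the sum over all families of injections `σ k : Fin (n 0) → Fin (n k)` with `σ 0 = id`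
of the products of the corresponding entries. -/
noncomputable def tensorPer {d : ℕ} (hd : 1 ≤ d) (n : Fin d → ℕ)
    (A : (∀ k : Fin d, Fin (n k)) → ℝ) : ℝ :=
  ∑ σ ∈ Finset.univ.filter
      (fun σ : ∀ k : Fin d, Fin (n ⟨0, hd⟩) → Fin (n k) =>
        (∀ k, Function.Injective (σ k)) ∧ σ ⟨0, hd⟩ = id),
    ∏ i : Fin (n ⟨0, hd⟩), A (fun k => σ k i)

/-!
Every term of the permanent vanishes. Fix a family of injections `σ` with `σ 0 = id`. For
`k ≠ 0`, at most `n k - |S k|` indices `i` have `σ k i ∉ S k`, and by the cardinality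
hypothesis these exceptional indices number fewer than `|S 0|`. Hence some `i ∈ S 0`
has `σ k i ∈ S k` for every `k`, and the factor `A (fun k => σ k i)` of the term is zero.
-/

open Finset

theorem Finset.exists_forall_mem_of_sum_card_compl_lt {ι α : Type*} {β : ι → Type*}
    [∀ k, Fintype (β k)] [∀ k, DecidableEq (β k)] (s : Finset ι) (T : Finset α)
    (S : ∀ k, Finset (β k)) (f : ∀ k, α → β k) (hf : ∀ k ∈ s, Set.InjOn (f k) T)
    (hlt : ∑ k ∈ s, #(S k)ᶜ < #T) :
    ∃ i ∈ T, ∀ k ∈ s, f k i ∈ S k := by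
  classical
  by_contra! hmiss
  have hcover : T ⊆ s.biUnion fun k => T.filter (f k · ∉ S k) := by
    intro i hi
    obtain ⟨k, hk, hki⟩ := hmiss i hi
    exact mem_biUnion.2 ⟨k, hk, mem_filter.2 ⟨hi, hki⟩⟩
  have hmaps (k : ι) (hk : k ∈ s) : #(T.filter (f k · ∉ S k)) ≤ #(S k)ᶜ :=
    card_le_card_of_injOn (f k) (fun i hi => mem_compl.2 (mem_filter.1 hi).2)
      ((hf k hk).mono fun i hi => (mem_filter.1 hi).1)
  have := (card_le_card hcover).trans (card_biUnion_le.trans (sum_le_sum hmaps))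
  omega

theorem Finset.sum_erase_card_compl_lt {ι : Type*} [Fintype ι] [DecidableEq ι] {β : ι → Type*}
    [∀ k, Fintype (β k)] [∀ k, DecidableEq (β k)] (S : ∀ k, Finset (β k)) (z : ι)
    (hcard : ∑ k, #(S k) = 1 + ∑ k ∈ univ.erase z, Fintype.card (β k)) :
    ∑ k ∈ univ.erase z, #(S k)ᶜ < #(S z) := by
  have hsplit := add_sum_erase univ (fun k => #(S k)) (mem_univ z)
  have hcompl : ∑ k ∈ univ.erase z, #(S k)ᶜ + ∑ k ∈ univ.erase z, #(S k)
      = ∑ k ∈ univ.erase z, Fintype.card (β k) := by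
    rw [← sum_add_distrib]
    exact sum_congr rfl fun k _ => card_compl_add_card (S k)
  omega

/-- Frobenius–König type condition (Dow–Gibson): if a tensor `A` contains a zero
sub-tensor of sizes `m k = |S k|` with `∑ k m k = 1 + ∑_{k ≠ 0} n k`, then `per A = 0`. -/
theorem per_eq_zero_of_zero_subtensor {d : ℕ} (hd : 1 ≤ d) (n : Fin d → ℕ)
    (A : (∀ k : Fin d, Fin (n k)) → ℝ)
    (S : ∀ k : Fin d, Finset (Fin (n k)))
    (hzero : ∀ x : ∀ k : Fin d, Fin (n k), (∀ k, x k ∈ S k) → A x = 0)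
    (hcard : ∑ k : Fin d, (S k).card
      = 1 + ∑ k ∈ Finset.univ.filter (fun k : Fin d => k ≠ ⟨0, hd⟩), n k) :
    tensorPer hd n A = 0 := by
  set z : Fin d := ⟨0, hd⟩
  refine sum_eq_zero fun σ hσ => ?_
  obtain ⟨hinj, hσz⟩ := (mem_filter.1 hσ).2
  rw [filter_ne'] at hcard
  obtain ⟨i, hi, hσi⟩ := exists_forall_mem_of_sum_card_compl_lt (univ.erase z) (S z) S σ
    (fun k _ => (hinj k).injOn) (sum_erase_card_compl_lt S z (by simpa using hcard))
  refine prod_eq_zero (mem_univ i) (hzero _ fun k => ?_)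
  by_cases hk : k = z
  · subst hk
    rwa [hσz]
  · exact hσi k (mem_erase.2 ⟨hk, mem_univ k⟩)
end

section
/- The number of subsets S of Fin n × Fin n × Fin n such that for every i there is exactly one pair (j,k) with (i,j,k) ∈ S, for every j there is exactly one pair (i,k) with (i,j,k) ∈ S, and for every k there is exactly one pair (i,j) with (i,j,k) ∈ S, equals (n!)². Equivalently, there are exactly (n!)² permutation tensors of order 3 and dimension n. -/
/-!
A set `S ⊆ α × β × γ` meeting each hyperplane `{i} × β × γ` exactly once is the graph
`{(i, σ i, τ i)}` of a map `α → β × γ`; the other two hyperplane conditions say exactly that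
both components `σ` and `τ` are bijections. Hence permutation tensors correspond to pairs of
bijections `(σ, τ)`.
-/

open Finset

theorem existsUnique_of_existsUnique_graph {α β γ : Type*} {g : α → β} {h : α → γ} {j : β}
    (hu : ∃! ik : α × γ, g ik.1 = j ∧ h ik.1 = ik.2) : ∃! i, g i = j := by
  obtain ⟨⟨i, k⟩, ⟨hi, -⟩, huniq⟩ := hu
  exact ⟨i, hi, fun i' hi' => congrArg Prod.fst (huniq (i', h i') ⟨hi', rfl⟩)⟩

section PermutationTensor

variable {α β γ : Type*} [Fintype α] [DecidableEq α] [DecidableEq β] [DecidableEq γ]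

def permutationTensor (σ : α ≃ β) (τ : α ≃ γ) : Finset (α × β × γ) :=
  univ.image fun i => (i, σ i, τ i)

@[simp]
theorem mem_permutationTensor {σ : α ≃ β} {τ : α ≃ γ} {i : α} {j : β} {k : γ} :
    (i, j, k) ∈ permutationTensor σ τ ↔ σ i = j ∧ τ i = k := by
  simp only [permutationTensor, mem_image, mem_univ, true_and, Prod.mk.injEq, exists_eq_left]

theorem permutationTensor_injective2 :
    Function.Injective2 (permutationTensor (α := α) (β := β) (γ := γ)) := by
  intro σ σ' τ τ' h
  have hmem (i : α) : σ' i = σ i ∧ τ' i = τ i :=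
    mem_permutationTensor.mp (h ▸ mem_permutationTensor.mpr ⟨rfl, rfl⟩)
  exact ⟨Equiv.ext fun i => (hmem i).1.symm, Equiv.ext fun i => (hmem i).2.symm⟩

variable [Fintype β] [Fintype γ]

def IsPermutationTensor (S : Finset (α × β × γ)) : Prop :=
  (∀ i : α, (univ.filter fun jk : β × γ => (i, jk.1, jk.2) ∈ S).card = 1) ∧
  (∀ j : β, (univ.filter fun ik : α × γ => (ik.1, j, ik.2) ∈ S).card = 1) ∧
  (∀ k : γ, (univ.filter fun ij : α × β => (ij.1, ij.2, k) ∈ S).card = 1)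

theorem isPermutationTensor_iff_existsUnique (S : Finset (α × β × γ)) :
    IsPermutationTensor S ↔
      (∀ i, ∃! jk : β × γ, (i, jk.1, jk.2) ∈ S) ∧
      (∀ j, ∃! ik : α × γ, (ik.1, j, ik.2) ∈ S) ∧
      (∀ k, ∃! ij : α × β, (ij.1, ij.2, k) ∈ S) := by
  simp only [IsPermutationTensor, Fintype.existsUnique_iff_card_one]

theorem isPermutationTensor_permutationTensor (σ : α ≃ β) (τ : α ≃ γ) :
    IsPermutationTensor (permutationTensor σ τ) := by
  rw [isPermutationTensor_iff_existsUnique]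
  refine ⟨fun i => ⟨(σ i, τ i), by simp, ?_⟩, fun j => ⟨(σ.symm j, τ (σ.symm j)), by simp, ?_⟩,
    fun k => ⟨(τ.symm k, σ (τ.symm k)), by simp, ?_⟩⟩
  · rintro ⟨j, k⟩ h
    obtain ⟨rfl, rfl⟩ : σ i = j ∧ τ i = k := mem_permutationTensor.mp h
    rfl
  · rintro ⟨i, k⟩ h
    obtain ⟨rfl, rfl⟩ : σ i = j ∧ τ i = k := mem_permutationTensor.mp h
    simp
  · rintro ⟨i, j⟩ h
    obtain ⟨rfl, rfl⟩ : σ i = j ∧ τ i = k := mem_permutationTensor.mp h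
    simp

theorem IsPermutationTensor.exists_eq_permutationTensor {S : Finset (α × β × γ)}
    (hS : IsPermutationTensor S) : ∃ σ : α ≃ β, ∃ τ : α ≃ γ, permutationTensor σ τ = S := by
  obtain ⟨h1, h2, h3⟩ := (isPermutationTensor_iff_existsUnique S).mp hS
  choose f hf hfu using h1
  have hmem (i : α) (j : β) (k : γ) : (i, j, k) ∈ S ↔ (f i).1 = j ∧ (f i).2 = k := by
    refine ⟨fun h => ?_, fun ⟨hj, hk⟩ => hj ▸ hk ▸ hf i⟩
    rw [← hfu i (j, k) h]
    exact ⟨rfl, rfl⟩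
  simp only [hmem] at h2 h3
  have hσ : Function.Bijective fun i => (f i).1 :=
    Function.bijective_iff_existsUnique _ |>.mpr fun j =>
      existsUnique_of_existsUnique_graph (h := fun i => (f i).2) (h2 j)
  have hτ : Function.Bijective fun i => (f i).2 :=
    Function.bijective_iff_existsUnique _ |>.mpr fun k =>
      existsUnique_of_existsUnique_graph (h := fun i => (f i).1) (by simpa only [and_comm] using h3 k)
  refine ⟨Equiv.ofBijective _ hσ, Equiv.ofBijective _ hτ, ?_⟩
  ext ⟨i, j, k⟩
  simp [hmem]

instance (S : Finset (α × β × γ)) : Decidable (IsPermutationTensor S) :=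
  inferInstanceAs (Decidable (_ ∧ _ ∧ _))

theorem card_filter_isPermutationTensor :
    (univ.filter (IsPermutationTensor (α := α) (β := β) (γ := γ))).card =
      Fintype.card (α ≃ β) * Fintype.card (α ≃ γ) := by
  have himage : univ.filter IsPermutationTensor =
      univ.image (Function.uncurry (permutationTensor (α := α) (β := β) (γ := γ))) := by
    ext S
    simp only [mem_filter, mem_univ, true_and, mem_image, Prod.exists, Function.uncurry_apply_pair]
    exact ⟨fun hS => hS.exists_eq_permutationTensor,
      fun ⟨σ, τ, hS⟩ => hS ▸ isPermutationTensor_permutationTensor σ τ⟩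
  rw [himage, card_image_of_injective _ permutationTensor_injective2.uncurry, card_univ,
    Fintype.card_prod]

end PermutationTensor

/-- There are exactly `(n!)²` permutation tensors of order 3 and dimension `n`:
the number of subsets `S` of `Fin n × Fin n × Fin n` meeting every hyperplane in
exactly one point is `(n!)²`. -/
theorem card_permutation_tensors (n : ℕ) :
    ((Finset.univ : Finset (Finset (Fin n × Fin n × Fin n))).filter
      (fun S =>
        (∀ i : Fin n,
          (Finset.univ.filter (fun jk : Fin n × Fin n => (i, jk.1, jk.2) ∈ S)).card = 1) ∧
        (∀ j : Fin n,
          (Finset.univ.filter (fun ik : Fin n × Fin n => (ik.1, j, ik.2) ∈ S)).card = 1) ∧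
        (∀ k : Fin n,
          (Finset.univ.filter (fun ij : Fin n × Fin n => (ij.1, ij.2, k) ∈ S)).card = 1))).card
    = n.factorial ^ 2 := by
  have hcard : Fintype.card (Fin n ≃ Fin n) = n.factorial := by
    rw [Fintype.card_equiv (Equiv.refl _), Fintype.card_fin]
  rw [sq, ← hcard]
  -- the two filters decide `∀ i : Fin n` through different instances
  convert card_filter_isPermutationTensor using 3
  rfl
end

section
/- Let P and Q be n×n×n line-stochastic tensors with Per(P) = 0 and Per(Q) = 0. Then either Per(t • P + (1 - t) • Q) = 0 for every real t with 0 < t < 1, or Per(t • P + (1 - t) • Q) ≠ 0 for every real t with 0 < t < 1. -/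
/-- A family `π : Fin n → Equiv.Perm (Fin n)` is discordant if
`π k i ≠ π l i` for all `k ≠ l` and all `i`. -/
def Discordant {n : ℕ} (π : Fin n → Equiv.Perm (Fin n)) : Prop :=
  ∀ k l, k ≠ l → ∀ i, π k i ≠ π l i

instance {n : ℕ} : DecidablePred (Discordant (n := n)) := fun _ =>
  inferInstanceAs (Decidable (∀ _ _, _ → ∀ _, _))

/-- The 2-permanent of an `n × n × n` tensor. -/
noncomputable def Per2 {n : ℕ} (A : Fin n → Fin n → Fin n → ℝ) : ℝ :=
  ∑ π ∈ Finset.univ.filter (fun π : Fin n → Equiv.Perm (Fin n) => Discordant π),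
    ∏ k : Fin n, ∏ i : Fin n, A i (π k i) k

/-- An `n × n × n` tensor is line-stochastic if all its entries are nonnegative
and all its line sums equal 1. -/
def LineStochastic {n : ℕ} (A : Fin n → Fin n → Fin n → ℝ) : Prop :=
  (∀ i j k, 0 ≤ A i j k) ∧
  (∀ j k, ∑ i, A i j k = 1) ∧
  (∀ i k, ∑ j, A i j k = 1) ∧
  (∀ i j, ∑ k, A i j k = 1)

/-!
For a nonnegative tensor, `Per2` is a sum of nonnegative products, so it vanishes exactly when
every discordant family meets a zero entry. A proper convex combination of two nonnegative
tensors has the union of their supports as its support, whatever the parameter `t ∈ (0, 1)`;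
hence whether its 2-permanent vanishes does not depend on `t`.
-/

theorem Per2_eq_zero_iff_of_nonneg {n : ℕ} {A : Fin n → Fin n → Fin n → ℝ}
    (hA : ∀ i j k, 0 ≤ A i j k) :
    Per2 A = 0 ↔ ∀ π, Discordant π → ∃ k i, A i (π k i) k = 0 := by
  have hterm_nonneg (π : Fin n → Equiv.Perm (Fin n)) :
      0 ≤ ∏ k : Fin n, ∏ i : Fin n, A i (π k i) k :=
    Finset.prod_nonneg fun k _ => Finset.prod_nonneg fun i _ => hA _ _ _
  simp only [Per2, Finset.sum_eq_zero_iff_of_nonneg (fun π _ => hterm_nonneg π),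
    Finset.mem_filter, Finset.mem_univ, true_and, Finset.prod_eq_zero_iff]

theorem convexCombination_eq_zero_iff {t a b : ℝ} (ht₀ : 0 < t) (ht₁ : t < 1)
    (ha : 0 ≤ a) (hb : 0 ≤ b) :
    t * a + (1 - t) * b = 0 ↔ a = 0 ∧ b = 0 := by
  rw [add_eq_zero_iff_of_nonneg (by positivity) (mul_nonneg (by linarith) hb),
    mul_eq_zero, mul_eq_zero, or_iff_right ht₀.ne', or_iff_right (by linarith)]

theorem Per2_convexCombination_eq_zero_iff {n : ℕ} {P Q : Fin n → Fin n → Fin n → ℝ}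
    (hP : ∀ i j k, 0 ≤ P i j k) (hQ : ∀ i j k, 0 ≤ Q i j k) {t : ℝ} (ht₀ : 0 < t) (ht₁ : t < 1) :
    Per2 (t • P + (1 - t) • Q) = 0 ↔
      ∀ π, Discordant π → ∃ k i, P i (π k i) k = 0 ∧ Q i (π k i) k = 0 := by
  have hentry (i j k : Fin n) : (t • P + (1 - t) • Q) i j k = t * P i j k + (1 - t) * Q i j k :=
    rfl
  have hnonneg (i j k : Fin n) : 0 ≤ (t • P + (1 - t) • Q) i j k := by
    rw [hentry]
    exact add_nonneg (mul_nonneg ht₀.le (hP i j k)) (mul_nonneg (by linarith) (hQ i j k))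
  simp only [Per2_eq_zero_iff_of_nonneg hnonneg, hentry,
    convexCombination_eq_zero_iff ht₀ ht₁ (hP _ _ _) (hQ _ _ _)]

theorem Per2_segment_dichotomy_general {n : ℕ} (P Q : Fin n → Fin n → Fin n → ℝ)
    (hP : LineStochastic P) (hQ : LineStochastic Q) :
    (∀ t : ℝ, 0 < t → t < 1 → Per2 (t • P + (1 - t) • Q) = 0) ∨
    (∀ t : ℝ, 0 < t → t < 1 → Per2 (t • P + (1 - t) • Q) ≠ 0) := by
  by_cases hcommon : ∀ π, Discordant π → ∃ k i, P i (π k i) k = 0 ∧ Q i (π k i) k = 0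
  · exact Or.inl fun t ht₀ ht₁ => (Per2_convexCombination_eq_zero_iff hP.1 hQ.1 ht₀ ht₁).2 hcommon
  · exact Or.inr fun t ht₀ ht₁ h =>
      hcommon ((Per2_convexCombination_eq_zero_iff hP.1 hQ.1 ht₀ ht₁).1 h)

/-- For line-stochastic tensors `P, Q` with vanishing 2-permanent, either every
proper convex combination of `P` and `Q` has vanishing 2-permanent, or none does. -/
theorem Per2_segment_dichotomy {n : ℕ} (P Q : Fin n → Fin n → Fin n → ℝ)
    (hP : LineStochastic P) (hQ : LineStochastic Q)
    (hP0 : Per2 P = 0) (hQ0 : Per2 Q = 0) :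
    (∀ t : ℝ, 0 < t → t < 1 → Per2 (t • P + (1 - t) • Q) = 0) ∨
    (∀ t : ℝ, 0 < t → t < 1 → Per2 (t • P + (1 - t) • Q) ≠ 0) :=
  Per2_segment_dichotomy_general P Q hP hQ
end

section
/- Let A : Fin 2 → Fin 2 → Fin 2 → ℝ be a line-stochastic 2×2×2 tensor. Then there exists t with 0 ≤ t ≤ 1 such that for all i, j, k, A i j k = t * E₀ i j k + (1 - t) * E₁ i j k, where E₀ i j k = 1 if i.val + j.val + k.val is even and 0 otherwise, and E₁ i j k = 1 if i.val + j.val + k.val is odd and 0 otherwise. (E₀ and E₁ are the two 2×2×2 line-permutation tensors, so every 2×2×2 line-stochastic tensor is a convex combination of line-permutation tensors.) -/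
/-- The `2 × 2 × 2` line-permutation tensor with 1s at the positions of even
coordinate sum. -/
def E₀ : Fin 2 → Fin 2 → Fin 2 → ℝ := fun i j k =>
  if Even (i.val + j.val + k.val) then 1 else 0

/-- The `2 × 2 × 2` line-permutation tensor with 1s at the positions of odd
coordinate sum. -/
def E₁ : Fin 2 → Fin 2 → Fin 2 → ℝ := fun i j k =>
  if Even (i.val + j.val + k.val) then 0 else 1

/-!
Each line of a `2 × 2 × 2` line-stochastic tensor has only two entries, so changing one
coordinate replaces an entry by its complement to `1`. Hence `A i j k` equals `A 0 0 0` or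
`1 - A 0 0 0` according to the parity of `i + j + k`, and `t = A 0 0 0` works.
-/

theorem LineStochastic.le_one {n : ℕ} {A : Fin n → Fin n → Fin n → ℝ} (hA : LineStochastic A)
    (i j k : Fin n) : A i j k ≤ 1 := by
  rw [← hA.2.1 j k]
  exact Finset.single_le_sum (fun i _ => hA.1 i j k) (Finset.mem_univ i)

namespace LineStochastic

variable {A : Fin 2 → Fin 2 → Fin 2 → ℝ}

theorem apply_one_left (hA : LineStochastic A) (j k : Fin 2) : A 1 j k = 1 - A 0 j k := by
  have hsum := hA.2.1 j k
  rw [Fin.sum_univ_two] at hsum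
  linarith

theorem apply_one_middle (hA : LineStochastic A) (i k : Fin 2) : A i 1 k = 1 - A i 0 k := by
  have hsum := hA.2.2.1 i k
  rw [Fin.sum_univ_two] at hsum
  linarith

theorem apply_one_right (hA : LineStochastic A) (i j : Fin 2) : A i j 1 = 1 - A i j 0 := by
  have hsum := hA.2.2.2 i j
  rw [Fin.sum_univ_two] at hsum
  linarith

theorem eq_parity_combination (hA : LineStochastic A) (i j k : Fin 2) :
    A i j k = A 0 0 0 * E₀ i j k + (1 - A 0 0 0) * E₁ i j k := by
  fin_cases i <;> fin_cases j <;> fin_cases k <;>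
    simp [E₀, E₁, hA.apply_one_left, hA.apply_one_middle, hA.apply_one_right, Nat.even_add_one]

end LineStochastic

/-- Every `2 × 2 × 2` line-stochastic tensor is a convex combination of the two
`2 × 2 × 2` line-permutation tensors `E₀` and `E₁`. -/
theorem lineStochastic_two_convex (A : Fin 2 → Fin 2 → Fin 2 → ℝ)
    (hA : LineStochastic A) :
    ∃ t : ℝ, 0 ≤ t ∧ t ≤ 1 ∧
      ∀ i j k, A i j k = t * E₀ i j k + (1 - t) * E₁ i j k := by
  exact ⟨A 0 0 0, hA.1 0 0 0, hA.le_one 0 0 0, hA.eq_parity_combination⟩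
end

section
/- Let C : Fin 2 → Fin 2 → Fin 2 → ℝ be defined by C i j k = 1/2 if i.val + j.val + k.val is odd and C i j k = 0 otherwise (so, in 1-based indexing, the entries at positions (2,1,1), (1,2,1), (1,1,2), (2,2,2) equal 1/2 and all other entries are 0). Then C is plane-stochastic, but C does not belong to the convex hull, in the real vector space of functions Fin 2 → Fin 2 → Fin 2 → ℝ, of the set of 2×2×2 plane-permutation tensors. -/
/-! A unit entry in a corner of a plane-stochastic tensor empties the three planes through that
corner, which forces a unit entry in the opposite corner. Hence every plane-permutation tensor,
and so every point of their convex hull, satisfies `A 0 0 0 = A 1 1 1`, whereas `C 0 0 0 = 0`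
and `C 1 1 1 = 1 / 2`. -/

def PlaneStochastic (A : Fin 2 → Fin 2 → Fin 2 → ℝ) : Prop :=
  (∀ i j k, 0 ≤ A i j k) ∧
  (∀ i, ∑ j, ∑ k, A i j k = 1) ∧
  (∀ j, ∑ i, ∑ k, A i j k = 1) ∧
  (∀ k, ∑ i, ∑ j, A i j k = 1)

def PlanePermutationTensor (A : Fin 2 → Fin 2 → Fin 2 → ℝ) : Prop :=
  PlaneStochastic A ∧ ∀ i j k, A i j k = 0 ∨ A i j k = 1

noncomputable def C : Fin 2 → Fin 2 → Fin 2 → ℝ := fun i j k =>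
  if Even (i.val + j.val + k.val) then 0 else 1 / 2

theorem planeStochastic_C : PlaneStochastic C := by
  simp only [PlaneStochastic, Fin.forall_fin_two, Fin.sum_univ_two, C]
  norm_num

theorem PlaneStochastic.apply_zero_zero_zero_eq_one_iff {A : Fin 2 → Fin 2 → Fin 2 → ℝ}
    (hA : PlaneStochastic A) : A 0 0 0 = 1 ↔ A 1 1 1 = 1 := by
  obtain ⟨hnonneg, hi, hj, hk⟩ := hA
  simp only [Fin.forall_fin_two, Fin.sum_univ_two] at hnonneg hi hj hk
  constructor <;> intro h <;> linarith

theorem PlanePermutationTensor.apply_zero_zero_zero_eq {A : Fin 2 → Fin 2 → Fin 2 → ℝ}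
    (hA : PlanePermutationTensor A) : A 0 0 0 = A 1 1 1 := by
  have hcorner := hA.1.apply_zero_zero_zero_eq_one_iff
  rcases hA.2 0 0 0 with h₀ | h₀ <;> rcases hA.2 1 1 1 with h₁ | h₁ <;> simp_all

theorem convex_setOf_apply_zero_zero_zero_eq :
    Convex ℝ {A : Fin 2 → Fin 2 → Fin 2 → ℝ | A 0 0 0 = A 1 1 1} := by
  intro A hA B hB a b _ _ _
  simp only [Set.mem_ofPred_eq, Pi.add_apply, Pi.smul_apply, smul_eq_mul] at hA hB ⊢
  rw [hA, hB]

theorem convexHull_planePermutationTensor_subset :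
    convexHull ℝ {A | PlanePermutationTensor A} ⊆ {A | A 0 0 0 = A 1 1 1} :=
  convexHull_min (fun _ hA => PlanePermutationTensor.apply_zero_zero_zero_eq hA)
    convex_setOf_apply_zero_zero_zero_eq

/-- `C` is plane-stochastic but is not a convex combination of `2 × 2 × 2`
plane-permutation tensors. -/
theorem C_planeStochastic_not_in_convexHull :
    PlaneStochastic C ∧
    C ∉ convexHull ℝ {A : Fin 2 → Fin 2 → Fin 2 → ℝ | PlanePermutationTensor A} := by
  refine ⟨planeStochastic_C, fun hC => ?_⟩
  have hcorner : C 0 0 0 = C 1 1 1 := convexHull_planePermutationTensor_subset hC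
  norm_num [C] at hcorner
end

section
/- Let Ω be the set of plane-stochastic 2×2×2 tensors, regarded as a subset of the real vector space of functions Fin 2 → Fin 2 → Fin 2 → ℝ. Then the set of extreme points of Ω has exactly 6 elements, and exactly 4 of these extreme points have all their entries in {0, 1}. -/
open Finset

local notation "𝕋" => Fin 2 → Fin 2 → Fin 2 → ℝ

theorem sum_smul_mem_convexHull {ι E : Type*} [Fintype ι] [AddCommGroup E] [Module ℝ E]
    {s : Set E} {w : ι → ℝ} {z : ι → E} (hw₀ : ∀ i, 0 ≤ w i) (hw₁ : ∑ i, w i = 1)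
    (hz : ∀ i, z i ∈ s) : ∑ i, w i • z i ∈ convexHull ℝ s :=
  (convex_convexHull ℝ s).sum_mem (fun i _ ↦ hw₀ i) hw₁ fun i _ ↦ subset_convexHull ℝ s (hz i)

theorem mem_extremePoints_of_zeros_subset {α β γ : Type*} {s : Set (α → β → γ → ℝ)}
    {T : α → β → γ → ℝ} (hs : ∀ x ∈ s, ∀ i j k, 0 ≤ x i j k) (hT : T ∈ s)
    (huniq : ∀ x ∈ s, (∀ i j k, T i j k = 0 → x i j k = 0) → x = T) :
    T ∈ s.extremePoints ℝ := by
  refine mem_extremePoints_iff_left.2 ⟨hT, fun x hx y hy ⟨u, v, hu, hv, _, hxy⟩ ↦ huniq x hx ?_⟩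
  intro i j k hT0
  have hsum : u * x i j k + v * y i j k = 0 := by
    simpa [hT0] using congrFun (congrFun (congrFun hxy i) j) k
  have := hs x hx i j k
  have := hs y hy i j k
  nlinarith

/-- The tensor with entries `a, b, c, e` at `000, 001, 010, 100` whose six plane sums are `1`. -/
def ofEntries (a b c e : ℝ) : 𝕋 :=
  ![![![a, b], ![c, 1 - a - b - c]],
    ![![e, 1 - a - b - e], ![1 - a - c - e, 2 * a + b + c + e - 1]]]

theorem ofEntries_inj {a b c e a' b' c' e' : ℝ} :
    ofEntries a b c e = ofEntries a' b' c' e' ↔ a = a' ∧ b = b' ∧ c = c' ∧ e = e' := by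
  refine ⟨fun h ↦ ⟨congrFun (congrFun (congrFun h 0) 0) 0, congrFun (congrFun (congrFun h 0) 0) 1,
    congrFun (congrFun (congrFun h 0) 1) 0, congrFun (congrFun (congrFun h 1) 0) 0⟩, ?_⟩
  rintro ⟨rfl, rfl, rfl, rfl⟩
  rfl

theorem planeStochastic_ofEntries_iff {a b c e : ℝ} :
    PlaneStochastic (ofEntries a b c e) ↔ 0 ≤ a ∧ 0 ≤ b ∧ 0 ≤ c ∧ 0 ≤ e ∧
      a + b + c ≤ 1 ∧ a + b + e ≤ 1 ∧ a + c + e ≤ 1 ∧ 1 ≤ 2 * a + b + c + e := by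
  simp only [PlaneStochastic, Fin.forall_fin_two, Fin.sum_univ_two, ofEntries,
    Matrix.cons_val_zero, Matrix.cons_val_one, sub_nonneg]
  ring_nf
  simp only [and_true]
  constructor
  · rintro ⟨⟨⟨h000, h001⟩, h010, h011⟩, ⟨h100, h101⟩, h110, h111⟩
    refine ⟨h000, h001, h010, h100, ?_, ?_, ?_, ?_⟩ <;> linarith
  · rintro ⟨ha, hb, hc, he, h011, h101, h110, h111⟩
    refine ⟨⟨⟨ha, hb⟩, hc, ?_⟩, ⟨he, ?_⟩, ?_, ?_⟩ <;> linarith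

theorem PlaneStochastic.eq_ofEntries {A : 𝕋} (hA : PlaneStochastic A) :
    A = ofEntries (A 0 0 0) (A 0 0 1) (A 0 1 0) (A 1 0 0) := by
  obtain ⟨-, hi, hj, hk⟩ := hA
  simp only [Fin.forall_fin_two, Fin.sum_univ_two] at hi hj hk
  funext i j k
  fin_cases i <;> fin_cases j <;> fin_cases k <;> simp [ofEntries] <;> linarith

theorem convex_setOf_planeStochastic : Convex ℝ {A : 𝕋 | PlaneStochastic A} := by
  rintro x ⟨hx0, hxi, hxj, hxk⟩ y ⟨hy0, hyi, hyj, hyk⟩ u v hu hv huv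
  simp only [Set.mem_ofPred_eq, PlaneStochastic, Pi.add_apply, Pi.smul_apply, smul_eq_mul,
    sum_add_distrib, ← mul_sum, hxi, hyi, hxj, hyj, hxk, hyk, mul_one, huv, implies_true,
    and_true]
  intro i j k
  have := hx0 i j k
  have := hy0 i j k
  positivity

-- indicators of the antipodal pairs `{000, 111}`, `{001, 110}`, `{010, 101}`, `{100, 011}`
noncomputable def permutationTensors : Finset 𝕋 :=
  {ofEntries 1 0 0 0, ofEntries 0 1 0 0, ofEntries 0 0 1 0, ofEntries 0 0 0 1}

-- the permutation tensors together with `E / 2` and `O / 2`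
noncomputable def vertices : Finset 𝕋 :=
  insert (ofEntries (1 / 2) 0 0 0) (insert (ofEntries 0 (1 / 2) (1 / 2) (1 / 2)) permutationTensors)

theorem card_permutationTensors : #permutationTensors = 4 := by
  rw [permutationTensors, card_insert_of_notMem, card_insert_of_notMem, card_pair] <;>
    simp [ofEntries_inj]

theorem card_vertices : #vertices = 6 := by
  rw [vertices, card_insert_of_notMem, card_insert_of_notMem, card_permutationTensors] <;>
    simp [permutationTensors, ofEntries_inj]

theorem filter_zero_or_one_vertices :
    {A ∈ vertices | ∀ i j k, A i j k = 0 ∨ A i j k = 1} = permutationTensors := by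
  rw [vertices, filter_insert, filter_insert, filter_true_of_mem, if_neg, if_neg]
  · intro h; norm_num [ofEntries] at h
  · intro h; norm_num [ofEntries] at h
  · intro A hA
    simp only [permutationTensors, mem_insert, mem_singleton] at hA
    rcases hA with rfl | rfl | rfl | rfl <;> norm_num [ofEntries, Fin.forall_fin_two]

theorem planeStochastic_of_mem_vertices {T : 𝕋} (hT : T ∈ vertices) : PlaneStochastic T := by
  simp only [vertices, permutationTensors, mem_insert, mem_singleton] at hT
  rcases hT with rfl | rfl | rfl | rfl | rfl | rfl <;>
    rw [planeStochastic_ofEntries_iff] <;> norm_num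

theorem PlaneStochastic.eq_of_mem_vertices_of_zeros {T x : 𝕋} (hT : T ∈ vertices)
    (hx : PlaneStochastic x) (hzero : ∀ i j k, T i j k = 0 → x i j k = 0) : x = T := by
  rw [hx.eq_ofEntries] at hzero ⊢
  simp only [vertices, permutationTensors, mem_insert, mem_singleton] at hT
  rcases hT with rfl | rfl | rfl | rfl | rfl | rfl <;>
    norm_num [ofEntries, Fin.forall_fin_two] at hzero <;>
    rw [ofEntries_inj] <;> casesm* _ ∧ _ <;> constructorm* _ ∧ _ <;> linarith

theorem ofEntries_mem_convexHull_vertices {a b c e : ℝ}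
    (h : PlaneStochastic (ofEntries a b c e)) : ofEntries a b c e ∈ convexHull ℝ ↑vertices := by
  obtain ⟨ha, hb, hc, he, h011, h101, h110, h111⟩ := planeStochastic_ofEntries_iff.1 h
  -- the weights are the odd (resp. even) entries and one minus their sum
  rcases le_total (a + b + c + e) 1 with hσ | hσ
  · convert sum_smul_mem_convexHull (s := ↑vertices)
      (w := ![2 * a + b + c + e - 1, b, c, e, 2 * (1 - (a + b + c + e))])
      (z := ![ofEntries 1 0 0 0, ofEntries 0 1 0 0, ofEntries 0 0 1 0, ofEntries 0 0 0 1,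
        ofEntries (1 / 2) 0 0 0]) ?_ ?_ ?_ using 1
    · funext i j k
      fin_cases i <;> fin_cases j <;> fin_cases k <;>
        simp only [Fin.sum_univ_five, Pi.add_apply, Pi.smul_apply, smul_eq_mul, ofEntries,
          Fin.zero_eta, Fin.mk_one, Matrix.cons_val_zero, Matrix.cons_val_one, Matrix.cons_val] <;>
        ring
    · intro i
      fin_cases i <;> simp <;> linarith
    · simp only [Fin.sum_univ_five, Matrix.cons_val_zero, Matrix.cons_val_one, Matrix.cons_val]
      ring
    · simp [Fin.forall_fin_succ, vertices, permutationTensors]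
  · convert sum_smul_mem_convexHull (s := ↑vertices)
      (w := ![a, 1 - a - c - e, 1 - a - b - e, 1 - a - b - c, 2 * (a + b + c + e - 1)])
      (z := ![ofEntries 1 0 0 0, ofEntries 0 1 0 0, ofEntries 0 0 1 0, ofEntries 0 0 0 1,
        ofEntries 0 (1 / 2) (1 / 2) (1 / 2)]) ?_ ?_ ?_ using 1
    · funext i j k
      fin_cases i <;> fin_cases j <;> fin_cases k <;>
        simp only [Fin.sum_univ_five, Pi.add_apply, Pi.smul_apply, smul_eq_mul, ofEntries,
          Fin.zero_eta, Fin.mk_one, Matrix.cons_val_zero, Matrix.cons_val_one, Matrix.cons_val] <;>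
        ring
    · intro i
      fin_cases i <;> simp <;> linarith
    · simp only [Fin.sum_univ_five, Matrix.cons_val_zero, Matrix.cons_val_one, Matrix.cons_val]
      ring
    · simp [Fin.forall_fin_succ, vertices, permutationTensors]

theorem convexHull_vertices : convexHull ℝ ↑vertices = {A : 𝕋 | PlaneStochastic A} := by
  refine (convexHull_min (fun T hT ↦ planeStochastic_of_mem_vertices hT)
    convex_setOf_planeStochastic).antisymm fun A (hA : PlaneStochastic A) ↦ ?_
  have hA' := hA.eq_ofEntries
  rw [hA'] at hA ⊢
  exact ofEntries_mem_convexHull_vertices hA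

theorem extremePoints_setOf_planeStochastic :
    {A : 𝕋 | PlaneStochastic A}.extremePoints ℝ = ↑vertices := by
  refine subset_antisymm ?_ fun T hT ↦ mem_extremePoints_of_zeros_subset (fun x hx ↦ hx.1)
    (planeStochastic_of_mem_vertices hT) fun x hx ↦ hx.eq_of_mem_vertices_of_zeros hT
  rw [← convexHull_vertices]
  exact extremePoints_convexHull_subset

/-- The polytope of plane-stochastic `2 × 2 × 2` tensors has exactly 6 extreme
points, exactly 4 of which are (0,1)-tensors. -/
theorem extremePoints_planeStochastic_two :
    ({A : Fin 2 → Fin 2 → Fin 2 → ℝ | PlaneStochastic A}.extremePoints ℝ).ncard = 6 ∧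
    {A ∈ {A : Fin 2 → Fin 2 → Fin 2 → ℝ | PlaneStochastic A}.extremePoints ℝ |
        ∀ i j k, A i j k = 0 ∨ A i j k = 1}.ncard = 4 := by
  rw [extremePoints_setOf_planeStochastic, Set.ncard_coe_finset, card_vertices,
    ← card_permutationTensors, ← Set.ncard_coe_finset, ← filter_zero_or_one_vertices, coe_filter]
  exact ⟨rfl, rfl⟩
end
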